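/- Let λ_1,…,λ_k, σ_1,…,σ_k ∈ ℂ be 2k pairwise distinct points and w, h ∈ ℂ^k. Set Λ = diag(λ_1,…,λ_k), Σ = diag(σ_1,…,σ_k), M = I_k, D = −Λ − Σ, K = ΛΣ + w·𝟙^T, b = w and c = h. Then for every s ∈ ℂ with s ∉ {λ_1,…,λ_k} ∪ {σ_1,…,σ_k} and d_SO(s) := 1 + Σ_{j=1}^k w_j/((s−λ_j)(s−σ_j)) ≠ 0, the matrix s²M + sD + K ∈ ℂ^{k×k} is invertible and c^T (s²M + sD + K)^{-1} b = (Σ_{j=1}^k h_j w_j/((s−λ_j)(s−σ_j))) / d_SO(s). -/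

import Mathlib

/-!
The matrix `s² I + s D + K` is the diagonal matrix with entries `(s - λⱼ)(s - σⱼ)` plus the
rank-one matrix `w 𝟙ᵀ`. A diagonal-plus-rank-one system is solved explicitly by the
Sherman–Morrison formula, which both shows that the matrix is invertible and gives
`(s² I + s D + K)⁻¹ w = (wⱼ / ((s - λⱼ)(s - σⱼ)) / d_SO(s))ⱼ`.
-/

open Matrix

namespace Matrix

variable {ι 𝕜 : Type*} [Fintype ι] [DecidableEq ι] [Field 𝕜] {d u v : ι → 𝕜}

theorem diagonal_add_vecMulVec_mulVec (d u v x : ι → 𝕜) :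
    (diagonal d + vecMulVec u v) *ᵥ x = fun i => d i * x i + u i * (v ⬝ᵥ x) := by
  ext i
  simp only [add_mulVec, vecMulVec_mulVec, Pi.add_apply, mulVec_diagonal, Pi.smul_apply,
    MulOpposite.smul_eq_mul_unop, MulOpposite.unop_op]

theorem diagonal_add_vecMulVec_mulVec_shermanMorrison (hd : ∀ i, d i ≠ 0)
    (hS : 1 + ∑ j, v j * u j / d j ≠ 0) (b : ι → 𝕜) :
    (diagonal d + vecMulVec u v) *ᵥ
        (fun i => (b i - u i * ((∑ j, v j * b j / d j) / (1 + ∑ j, v j * u j / d j))) / d i)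
      = b := by
  set t := (∑ j, v j * b j / d j) / (1 + ∑ j, v j * u j / d j)
  have hvx : v ⬝ᵥ (fun i => (b i - u i * t) / d i) = t := by
    have : v ⬝ᵥ (fun i => (b i - u i * t) / d i)
        = ∑ j, v j * b j / d j - (∑ j, v j * u j / d j) * t := by
      simp only [dotProduct, Finset.sum_mul, ← Finset.sum_sub_distrib]
      exact Finset.sum_congr rfl fun j _ => by ring
    rw [this, eq_comm, eq_sub_iff_add_eq, ← one_add_mul, mul_comm, div_mul_cancel₀ _ hS]
  rw [diagonal_add_vecMulVec_mulVec, hvx]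
  ext i
  rw [mul_div_cancel₀ _ (hd i), sub_add_cancel]

theorem isUnit_diagonal_add_vecMulVec (hd : ∀ i, d i ≠ 0) (hS : 1 + ∑ j, v j * u j / d j ≠ 0) :
    IsUnit (diagonal d + vecMulVec u v) :=
  mulVec_surjective_iff_isUnit.mp fun b =>
    ⟨_, diagonal_add_vecMulVec_mulVec_shermanMorrison hd hS b⟩

theorem inv_diagonal_add_vecMulVec_mulVec_self (hd : ∀ i, d i ≠ 0)
    (hS : 1 + ∑ j, v j * u j / d j ≠ 0) :
    (diagonal d + vecMulVec u v)⁻¹ *ᵥ u = fun i => u i / d i / (1 + ∑ j, v j * u j / d j) := by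
  set A := diagonal d + vecMulVec u v
  have hdet : IsUnit A.det := (isUnit_iff_isUnit_det A).mp (isUnit_diagonal_add_vecMulVec hd hS)
  conv_lhs => rw [← diagonal_add_vecMulVec_mulVec_shermanMorrison hd hS u]
  rw [mulVec_mulVec, nonsing_inv_mul A hdet, one_mulVec]
  ext i
  field_simp
  ring

end Matrix

theorem stmt_12_general (k : ℕ) (lam sig : Fin k → ℂ)
    (w h : Fin k → ℂ)
    (D K : Matrix (Fin k) (Fin k) ℂ)
    (hD : D = - Matrix.diagonal lam - Matrix.diagonal sig)
    (hK : K = Matrix.diagonal lam * Matrix.diagonal sig + Matrix.of (fun i _ => w i))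
    (s : ℂ) (hsl : ∀ j, s ≠ lam j) (hss : ∀ j, s ≠ sig j)
    (hd : 1 + ∑ j, w j / ((s - lam j) * (s - sig j)) ≠ 0) :
    IsUnit (s ^ 2 • (1 : Matrix (Fin k) (Fin k) ℂ) + s • D + K)
    ∧ dotProduct h ((s ^ 2 • (1 : Matrix (Fin k) (Fin k) ℂ) + s • D + K)⁻¹.mulVec w)
        = (∑ j, h j * w j / ((s - lam j) * (s - sig j)))
            / (1 + ∑ j, w j / ((s - lam j) * (s - sig j))) := by
  have hA : s ^ 2 • (1 : Matrix (Fin k) (Fin k) ℂ) + s • D + K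
      = diagonal (fun j => (s - lam j) * (s - sig j)) + vecMulVec w 1 := by
    ext i j
    rcases eq_or_ne i j with rfl | hij
    · simp [hD, hK]
      ring
    · simp [hD, hK, hij]
  have hdiag : ∀ j, (s - lam j) * (s - sig j) ≠ 0 := fun j =>
    mul_ne_zero (sub_ne_zero.2 (hsl j)) (sub_ne_zero.2 (hss j))
  have hS : 1 + ∑ j, (1 : Fin k → ℂ) j * w j / ((s - lam j) * (s - sig j)) ≠ 0 := by
    simpa only [Pi.one_apply, one_mul] using hd
  rw [hA, inv_diagonal_add_vecMulVec_mulVec_self hdiag hS]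
  refine ⟨isUnit_diagonal_add_vecMulVec hdiag hS, ?_⟩
  simp only [dotProduct, Pi.one_apply, one_mul, Finset.sum_div, mul_div_assoc]

/-- Second-order state-space realization of the second-order
barycentric form: with `M = I`, `D = −Λ − Σ`, `K = ΛΣ + w𝟙ᵀ`, `b = w`, `c = h`,
for each `s` outside the (quasi-)support points with nonvanishing barycentric
denominator `d_SO(s)`, the matrix `s²M + sD + K` is invertible and
`cᵀ(s²M + sD + K)⁻¹ b = (Σ_j h_j w_j/((s−λ_j)(s−σ_j))) / d_SO(s)`. -/
theorem stmt_12 (k : ℕ) (lam sig : Fin k → ℂ)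
    (hlam : Function.Injective lam) (hsig : Function.Injective sig)
    (hls : ∀ i j, lam i ≠ sig j)
    (w h : Fin k → ℂ)
    (D K : Matrix (Fin k) (Fin k) ℂ)
    (hD : D = - Matrix.diagonal lam - Matrix.diagonal sig)
    (hK : K = Matrix.diagonal lam * Matrix.diagonal sig + Matrix.of (fun i _ => w i))
    (s : ℂ) (hsl : ∀ j, s ≠ lam j) (hss : ∀ j, s ≠ sig j)
    (hd : 1 + ∑ j, w j / ((s - lam j) * (s - sig j)) ≠ 0) :
    IsUnit (s ^ 2 • (1 : Matrix (Fin k) (Fin k) ℂ) + s • D + K)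
    ∧ dotProduct h ((s ^ 2 • (1 : Matrix (Fin k) (Fin k) ℂ) + s • D + K)⁻¹.mulVec w)
        = (∑ j, h j * w j / ((s - lam j) * (s - sig j)))
            / (1 + ∑ j, w j / ((s - lam j) * (s - sig j))) :=
  stmt_12_general k lam sig w h D K hD hK s hsl hss hd
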